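/- For every continuous function f : ℝⁿ → ℝ, every box K = ∏_{i=1}^n [mᵢ, Mᵢ] (mᵢ ≤ Mᵢ), and every ε > 0, there exist two finite linear combinations of sigmoids Ψ_U(x) = ∑_{i=1}^{N_U} A_{U,i} σ(∑_j C_{U,i,j} xⱼ + B_{U,i}) and Ψ_L(x) = ∑_{i=1}^{N_L} A_{L,i} σ(∑_j C_{L,i,j} xⱼ + B_{L,i}) (with real coefficients) such that for all x ∈ K: 0 ≤ Ψ_U(x) − f(x) ≤ ε and 0 ≤ f(x) − Ψ_L(x) ≤ ε. -/

import Mathlib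

/-- The sigmoid function `σ(y) = (1 + exp (−y))⁻¹`. -/
noncomputable def sigmoid (y : ℝ) : ℝ := (1 + Real.exp (-y))⁻¹

/-!
On a compact set, Stone–Weierstrass approximates `f` uniformly by linear combinations of the
exponentials `x ↦ exp (w ⬝ᵥ x)`, which span a point-separating subalgebra. Each exponential
is in turn a uniform limit of rescaled, shifted sigmoids on any half-line `y ≤ R`, since
`0 ≤ exp y - exp (-b) σ(y + b) ≤ exp (2y + b)`. This gives a sigmoid sum `g` with
`|g - f| < ε / 2`; a last neuron with zero weights and output `± ε` adds the constant `± ε / 2`,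
since `σ 0 = 1 / 2`.
-/

open Set Matrix

noncomputable def sigmoidNet {ι : Type*} [Fintype ι] {N : ℕ} (A B : Fin N → ℝ)
    (C : Fin N → ι → ℝ) (x : ι → ℝ) : ℝ :=
  ∑ i, A i * sigmoid (C i ⬝ᵥ x + B i)

lemma sigmoid_zero : sigmoid 0 = 1 / 2 := by
  norm_num [sigmoid]

lemma exp_sub_exp_neg_mul_sigmoid_add (y b : ℝ) :
    Real.exp y - Real.exp (-b) * sigmoid (y + b) =
      Real.exp (2 * y + b) / (1 + Real.exp (y + b)) := by
  simp only [sigmoid, neg_add, Real.exp_add, Real.exp_neg, two_mul]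
  field_simp
  ring

lemma exists_sigmoid_near_exp (c R : ℝ) {δ : ℝ} (hδ : 0 < δ) :
    ∃ a b : ℝ, ∀ y ≤ R, |a * sigmoid (y + b) - c * Real.exp y| ≤ δ := by
  -- `b` is chosen so that `exp (2 * R + b) = δ / (|c| + 1)`
  set b := Real.log (δ / (|c| + 1)) - 2 * R
  refine ⟨c * Real.exp (-b), b, fun y hy => ?_⟩
  have hgap : Real.exp (2 * y + b) ≤ δ / (|c| + 1) := by
    rw [← Real.exp_log (by positivity : 0 < δ / (|c| + 1))]
    exact Real.exp_le_exp.mpr (by linarith)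
  have hden : 1 ≤ 1 + Real.exp (y + b) := le_add_of_nonneg_right (Real.exp_pos _).le
  calc |c * Real.exp (-b) * sigmoid (y + b) - c * Real.exp y|
      = |c| * |Real.exp y - Real.exp (-b) * sigmoid (y + b)| := by
        rw [← abs_mul, abs_sub_comm]
        ring_nf
    _ = |c| * (Real.exp (2 * y + b) / (1 + Real.exp (y + b))) := by
        rw [exp_sub_exp_neg_mul_sigmoid_add, abs_of_nonneg (a := _ / _) (by positivity)]
    _ ≤ |c| * (δ / (|c| + 1)) :=
        mul_le_mul_of_nonneg_left ((div_le_self (Real.exp_pos _).le hden).trans hgap)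
          (abs_nonneg c)
    _ ≤ δ := by
        rw [mul_div_assoc', div_le_iff₀ (by positivity)]
        nlinarith

section ExpRidge

variable {ι : Type*} [Fintype ι]

noncomputable def expRidge (w : ι → ℝ) : C(ι → ℝ, ℝ) :=
  ⟨fun x => Real.exp (w ⬝ᵥ x), by fun_prop⟩

@[simp]
lemma expRidge_apply (w x : ι → ℝ) : expRidge w x = Real.exp (w ⬝ᵥ x) := rfl

lemma expRidge_zero : expRidge (0 : ι → ℝ) = 1 := by
  ext x
  simp

lemma expRidge_add (w w' : ι → ℝ) : expRidge (w + w') = expRidge w * expRidge w' := by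
  ext x
  simp [add_dotProduct, Real.exp_add]

lemma adjoin_range_expRidge_eq_span :
    Subalgebra.toSubmodule (Algebra.adjoin ℝ (range (expRidge (ι := ι)))) =
      Submodule.span ℝ (range expRidge) := by
  refine Algebra.adjoin_eq_span_of_subset ℝ fun g hg => Submodule.subset_span ?_
  induction hg using Submonoid.closure_induction with
  | mem g hg => exact hg
  | one => exact ⟨0, expRidge_zero⟩
  | mul _ _ _ _ hg hg' =>
    obtain ⟨⟨w, rfl⟩, ⟨w', rfl⟩⟩ := And.intro hg hg'
    exact ⟨w + w', expRidge_add w w'⟩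

lemma separatesPoints_adjoin_range_expRidge :
    (Algebra.adjoin ℝ (range (expRidge (ι := ι)))).SeparatesPoints := by
  classical
  intro x y hxy
  obtain ⟨j, hj⟩ := Function.ne_iff.mp hxy
  refine ⟨_, ⟨expRidge (Pi.single j 1), Algebra.subset_adjoin ⟨_, rfl⟩, rfl⟩, ?_⟩
  simpa [single_dotProduct] using hj

theorem exists_expRidge_sum_near {K : Set (ι → ℝ)} (hK : IsCompact K)
    {f : (ι → ℝ) → ℝ} (hf : Continuous f) {ε : ℝ} (hε : 0 < ε) :
    ∃ (N : ℕ) (c : Fin N → ℝ) (w : Fin N → ι → ℝ),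
      ∀ x ∈ K, |∑ i, c i * Real.exp (w i ⬝ᵥ x) - f x| < ε := by
  obtain ⟨g, hg, hgf⟩ :=
    ContinuousMap.exists_mem_subalgebra_near_continuous_of_isCompact_of_separatesPoints
      separatesPoints_adjoin_range_expRidge ⟨f, hf⟩ hK hε
  have hg_span : g ∈ Submodule.span ℝ (range expRidge) := by
    rw [← adjoin_range_expRidge_eq_span]
    exact hg
  obtain ⟨N, c, v, rfl⟩ := Submodule.mem_span_set'.mp hg_span
  choose w hw using fun i => (v i).2
  refine ⟨N, c, w, fun x hx => ?_⟩
  simpa [← hw] using hgf x hx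

end ExpRidge

theorem exists_sigmoidNet_near {ι : Type*} [Fintype ι] {K : Set (ι → ℝ)} (hK : IsCompact K)
    {f : (ι → ℝ) → ℝ} (hf : Continuous f) {ε : ℝ} (hε : 0 < ε) :
    ∃ (N : ℕ) (A B : Fin N → ℝ) (C : Fin N → ι → ℝ),
      ∀ x ∈ K, |sigmoidNet A B C x - f x| < ε := by
  obtain ⟨N, c, w, hcw⟩ := exists_expRidge_sum_near hK hf (half_pos hε)
  set δ := ε / (2 * (N + 1))
  have hδ : 0 < δ := by positivity
  have hNδ : N * δ < ε / 2 := by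
    rw [mul_div_assoc', div_lt_div_iff₀ (by positivity) two_pos]
    nlinarith
  choose R hR using fun i => hK.bddAbove_image (f := (w i ⬝ᵥ ·)) (by fun_prop)
  choose A B hAB using fun i => exists_sigmoid_near_exp (c i) (R i) hδ
  refine ⟨N, A, B, w, fun x hx => ?_⟩
  have hterm (i : Fin N) :
      |A i * sigmoid (w i ⬝ᵥ x + B i) - c i * Real.exp (w i ⬝ᵥ x)| ≤ δ :=
    hAB i _ (hR i ⟨x, hx, rfl⟩)
  have hsum : |sigmoidNet A B w x - ∑ i, c i * Real.exp (w i ⬝ᵥ x)| ≤ N * δ := by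
    rw [sigmoidNet, ← Finset.sum_sub_distrib]
    refine (Finset.abs_sum_le_sum_abs _ _).trans ?_
    simpa using Finset.sum_le_sum fun i (_ : i ∈ Finset.univ) => hterm i
  linarith [abs_sub_le (sigmoidNet A B w x) (∑ i, c i * Real.exp (w i ⬝ᵥ x)) (f x), hcw x hx]

lemma sigmoidNet_snoc_const {ι : Type*} [Fintype ι] {N : ℕ} (A B : Fin N → ℝ)
    (C : Fin N → ι → ℝ) (a : ℝ) (x : ι → ℝ) :
    sigmoidNet (Fin.snoc A a : Fin (N + 1) → ℝ) (Fin.snoc B 0) (Fin.snoc C 0) x =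
      sigmoidNet A B C x + a / 2 := by
  simp [sigmoidNet, Fin.sum_univ_castSucc, sigmoid_zero, div_eq_mul_inv]

theorem sigmoid_upper_lower_approximation_general
    (n : ℕ) (m M : Fin n → ℝ)
    (f : (Fin n → ℝ) → ℝ) (hf : Continuous f) (ε : ℝ) (hε : 0 < ε) :
    ∃ (NU : ℕ) (AU BU : Fin NU → ℝ) (CU : Fin NU → Fin n → ℝ)
      (NL : ℕ) (AL BL : Fin NL → ℝ) (CL : Fin NL → Fin n → ℝ),
      ∀ x ∈ Set.univ.pi (fun i => Set.Icc (m i) (M i)),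
        (0 ≤ (∑ i : Fin NU, AU i * sigmoid (∑ j : Fin n, CU i j * x j + BU i)) - f x ∧
          (∑ i : Fin NU, AU i * sigmoid (∑ j : Fin n, CU i j * x j + BU i)) - f x ≤ ε) ∧
        (0 ≤ f x - (∑ i : Fin NL, AL i * sigmoid (∑ j : Fin n, CL i j * x j + BL i)) ∧
          f x - (∑ i : Fin NL, AL i * sigmoid (∑ j : Fin n, CL i j * x j + BL i)) ≤ ε) := by
  obtain ⟨N, A, B, C, hg⟩ :=
    exists_sigmoidNet_near (isCompact_univ_pi fun i => isCompact_Icc) hf (half_pos hε)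
  refine ⟨N + 1, Fin.snoc A ε, Fin.snoc B 0, Fin.snoc C 0,
    N + 1, Fin.snoc A (-ε), Fin.snoc B 0, Fin.snoc C 0, fun x hx => ?_⟩
  have hU := sigmoidNet_snoc_const A B C ε x
  have hL := sigmoidNet_snoc_const A B C (-ε) x
  have hgx := abs_lt.mp (hg x hx)
  simp only [sigmoidNet, dotProduct] at hU hL hgx
  rw [hU, hL]
  refine ⟨⟨?_, ?_⟩, ?_, ?_⟩ <;> linarith

/-- For any continuous `f` on the box `K = ∏ᵢ [mᵢ, Mᵢ]` and any `ε > 0` there are finite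
linear combinations of sigmoids `Ψ_U` and `Ψ_L` with
`0 ≤ Ψ_U(x) − f(x) ≤ ε` and `0 ≤ f(x) − Ψ_L(x) ≤ ε` on `K`. -/
theorem sigmoid_upper_lower_approximation
    (n : ℕ) (m M : Fin n → ℝ) (hmM : ∀ i, m i ≤ M i)
    (f : (Fin n → ℝ) → ℝ) (hf : Continuous f) (ε : ℝ) (hε : 0 < ε) :
    ∃ (NU : ℕ) (AU BU : Fin NU → ℝ) (CU : Fin NU → Fin n → ℝ)
      (NL : ℕ) (AL BL : Fin NL → ℝ) (CL : Fin NL → Fin n → ℝ),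
      ∀ x ∈ Set.univ.pi (fun i => Set.Icc (m i) (M i)),
        (0 ≤ (∑ i : Fin NU, AU i * sigmoid (∑ j : Fin n, CU i j * x j + BU i)) - f x ∧
          (∑ i : Fin NU, AU i * sigmoid (∑ j : Fin n, CU i j * x j + BU i)) - f x ≤ ε) ∧
        (0 ≤ f x - (∑ i : Fin NL, AL i * sigmoid (∑ j : Fin n, CL i j * x j + BL i)) ∧
          f x - (∑ i : Fin NL, AL i * sigmoid (∑ j : Fin n, CL i j * x j + BL i)) ≤ ε) :=
  sigmoid_upper_lower_approximation_general n m M f hf ε hε
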